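/- arXiv:1106.6206 — 2 statements merged into one kernel-verified Lean document; each statement's English description precedes it below -/
import Mathlib

section
/- Let q ≥ 2, m ≥ 1, n ≥ 1 be integers, let C ⊆ Q^m be a nonempty code, and let d be an integer with 1 ≤ d ≤ mn. Then for every real x with 0 < x ≤ 1 there exists a subcode D ⊆ C^n ⊆ Q^{mn} whose distinct codewords have pairwise Hamming distance at least d and whose cardinality satisfies |D| ≥ x^d · ( Σ_{c∈C} 1/B_c(x) )^n. -/
open Finset

/-- The local distance enumerator `B_c(x) = Σ_j |{y ∈ C : d(c,y) = j}| x^j` of `c` in `C`. -/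
noncomputable def localDistEnum (q m : ℕ) (C : Finset (Fin m → Fin q))
    (c : Fin m → Fin q) (x : ℝ) : ℝ :=
  ∑ y ∈ C, x ^ hammingDist c y

/-- `codePow q m n C = C^n` : words of length `mn` over `Q` (indexed by `Fin n × Fin m`)
that are concatenations of `n` codewords of `C`. -/
def codePow (q m n : ℕ) (C : Finset (Fin m → Fin q)) : Finset (Fin n × Fin m → Fin q) :=
  Finset.univ.filter fun w => ∀ i : Fin n, (fun j => w (i, j)) ∈ C

/-!
Join two words of `C^n` when their distance is at most `d - 1`; an independent set of this graph
is a code of minimum distance `d`. By Caro–Wei, some independent set has at least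
`∑_w 1 / |ball(w, d - 1)|` elements. Since `x ≤ 1`, `x^(d-1) |ball(w, d - 1)|` is at most
`∑_{v ∈ C^n} x^d(w,v)`, which factors over the `n` blocks as `∏_i B_{w_i}(x)`; summing
`x^(d-1) / ∏_i B_{w_i}(x)` over `w ∈ C^n` gives `x^(d-1) (∑_{c ∈ C} 1 / B_c(x))^n`.
-/

section CaroWei

variable {α : Type*} (r : α → α → Prop) [DecidableRel r]

lemma sum_inv_card_filter_rel_le_one {S : Finset α} {w : α}
    (hmin : ∀ v ∈ S, #{u ∈ S | r w u} ≤ #{u ∈ S | r v u}) :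
    ∑ v ∈ S with r w v, (1 : ℝ) / #{u ∈ S | r v u} ≤ 1 :=
  calc ∑ v ∈ S with r w v, (1 : ℝ) / #{u ∈ S | r v u}
      ≤ ∑ v ∈ S with r w v, (1 : ℝ) / #{u ∈ S | r w u} := by
        refine sum_le_sum fun v hv => one_div_le_one_div_of_le ?_ ?_
        · exact_mod_cast card_pos.2 ⟨v, hv⟩
        · exact_mod_cast hmin v (mem_filter.1 hv).1
    _ ≤ 1 := by
        rw [sum_const, nsmul_eq_mul, mul_one_div]
        exact div_self_le_one _

lemma one_div_card_filter_rel_le_of_subset {S T : Finset α} (hST : T ⊆ S) {v : α}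
    (hv : v ∈ T) (hrefl : r v v) :
    (1 : ℝ) / #{u ∈ S | r v u} ≤ 1 / #{u ∈ T | r v u} := by
  refine one_div_le_one_div_of_le ?_ ?_
  · exact_mod_cast card_pos.2 ⟨v, mem_filter.2 ⟨hv, hrefl⟩⟩
  · exact_mod_cast card_le_card (filter_subset_filter _ hST)

/-- Caro–Wei for the graph on `S` with adjacency `r`: as `r` is reflexive, `#{v ∈ S | r w v}`
is the size of the closed neighbourhood of `w`. -/
theorem exists_pairwise_not_rel_sum_inv_card_le [DecidableEq α] (hrefl : ∀ a, r a a)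
    (hsymm : ∀ a b, r a b → r b a) (S : Finset α) :
    ∃ D ⊆ S, (D : Set α).Pairwise (fun u v => ¬ r u v) ∧
      ∑ w ∈ S, (1 : ℝ) / #{v ∈ S | r w v} ≤ #D := by
  induction S using Finset.strongInduction with
  | _ S ih =>
  obtain rfl | hS := S.eq_empty_or_nonempty
  · exact ⟨∅, empty_subset _, by simp, by simp⟩
  -- Greedily keep a vertex of minimum degree and discard its closed neighbourhood.
  obtain ⟨w, hwS, hmin⟩ := S.exists_min_image (fun v => #{u ∈ S | r v u}) hS
  set N := {v ∈ S | r w v}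
  have hwN : w ∈ N := mem_filter.2 ⟨hwS, hrefl w⟩
  obtain ⟨D, hDS, hD, hsum⟩ := ih (S \ N) (sdiff_ssubset (filter_subset _ _) ⟨w, hwN⟩)
  have hfar : ∀ b ∈ D, ¬ r w b := fun b hb hwb =>
    (mem_sdiff.1 (hDS hb)).2 (mem_filter.2 ⟨(mem_sdiff.1 (hDS hb)).1, hwb⟩)
  have hwD : w ∉ D := fun hw => hfar w hw (hrefl w)
  refine ⟨insert w D, insert_subset hwS (hDS.trans sdiff_subset), ?_, ?_⟩
  · rw [coe_insert]
    exact hD.insert fun b hb _ => ⟨hfar b hb, fun hbw => hfar b hb (hsymm b w hbw)⟩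
  · calc ∑ v ∈ S, (1 : ℝ) / #{u ∈ S | r v u}
        = ∑ v ∈ S \ N, (1 : ℝ) / #{u ∈ S | r v u}
            + ∑ v ∈ N, (1 : ℝ) / #{u ∈ S | r v u} :=
          (sum_sdiff (filter_subset _ _)).symm
      _ ≤ ∑ v ∈ S \ N, (1 : ℝ) / #{u ∈ S \ N | r v u} + 1 :=
          add_le_add (sum_le_sum fun v hv =>
              one_div_card_filter_rel_le_of_subset r sdiff_subset hv (hrefl v))
            (sum_inv_card_filter_rel_le_one r hmin)
      _ ≤ #(insert w D) := by
          rw [card_insert_of_notMem hwD]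
          push_cast
          linarith

end CaroWei

section HammingBall

variable {ι : Type*} [Fintype ι] {β : ι → Type*} [∀ i, DecidableEq (β i)]

lemma pow_mul_card_hammingBall_le_sum_pow {x : ℝ} (hx0 : 0 ≤ x) (hx1 : x ≤ 1)
    (S : Finset (∀ i, β i)) (w : ∀ i, β i) (r : ℕ) :
    x ^ r * #{v ∈ S | hammingDist w v ≤ r} ≤ ∑ v ∈ S, x ^ hammingDist w v :=
  calc x ^ r * #{v ∈ S | hammingDist w v ≤ r}
      = ∑ v ∈ S with hammingDist w v ≤ r, x ^ r := by rw [sum_const, nsmul_eq_mul, mul_comm]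
    _ ≤ ∑ v ∈ S with hammingDist w v ≤ r, x ^ hammingDist w v :=
        sum_le_sum fun v hv => pow_le_pow_of_le_one hx0 hx1 (mem_filter.1 hv).2
    _ ≤ ∑ v ∈ S, x ^ hammingDist w v :=
        sum_le_sum_of_subset_of_nonneg (filter_subset _ _) fun v _ _ => pow_nonneg hx0 _

lemma pow_div_sum_pow_hammingDist_le_one_div_card {x : ℝ} (hx0 : 0 ≤ x) (hx1 : x ≤ 1)
    {S : Finset (∀ i, β i)} {w : ∀ i, β i} (hw : w ∈ S) (r : ℕ) :
    x ^ r / ∑ v ∈ S, x ^ hammingDist w v ≤ 1 / #{v ∈ S | hammingDist w v ≤ r} := by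
  have hball : (0 : ℝ) < #{v ∈ S | hammingDist w v ≤ r} := by
    exact_mod_cast card_pos.2 ⟨w, mem_filter.2 ⟨hw, by simp⟩⟩
  have hsum : 0 < ∑ v ∈ S, x ^ hammingDist w v :=
    sum_pos' (fun v _ => pow_nonneg hx0 _) ⟨w, hw, by simp⟩
  rw [div_le_div_iff₀ hsum hball, one_mul]
  exact pow_mul_card_hammingBall_le_sum_pow hx0 hx1 S w r

end HammingBall

lemma hammingDist_eq_sum_hammingDist_rows {ι κ β : Type*} [Fintype ι] [Fintype κ]
    [DecidableEq β] (w v : ι × κ → β) :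
    hammingDist w v = ∑ i, hammingDist (fun j => w (i, j)) (fun j => v (i, j)) := by
  simp only [hammingDist, card_filter, Fintype.sum_prod_type]

section CodePow

variable {q m n : ℕ} (C : Finset (Fin m → Fin q))

lemma sum_codePow_prod {R : Type*} [CommSemiring R] (g : Fin n → (Fin m → Fin q) → R) :
    ∑ w ∈ codePow q m n C, ∏ i, g i (fun j => w (i, j)) = ∏ i, ∑ c ∈ C, g i c := by
  rw [← sum_prod_piFinset]
  refine sum_nbij' (fun w i j => w (i, j)) (fun g p => g p.1 p.2) ?_ ?_ ?_ ?_ ?_ <;>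
    simp [codePow, Fintype.mem_piFinset]

lemma sum_codePow_pow_hammingDist (w : Fin n × Fin m → Fin q) (x : ℝ) :
    ∑ v ∈ codePow q m n C, x ^ hammingDist w v
      = ∏ i, localDistEnum q m C (fun j => w (i, j)) x := by
  simp only [localDistEnum, ← sum_codePow_prod, hammingDist_eq_sum_hammingDist_rows,
    prod_pow_eq_pow_sum]

lemma sum_codePow_prod_one_div_localDistEnum (x : ℝ) :
    ∑ w ∈ codePow q m n C, ∏ i, 1 / localDistEnum q m C (fun j => w (i, j)) x
      = (∑ c ∈ C, 1 / localDistEnum q m C c x) ^ n := by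
  rw [sum_codePow_prod C (fun _ c => 1 / localDistEnum q m C c x), prod_const, card_univ,
    Fintype.card_fin]

end CodePow

theorem exists_subcode_of_codePow_caro_wei_general (q m n : ℕ) (C : Finset (Fin m → Fin q)) (d : ℕ)
    (x : ℝ) (hx0 : 0 < x) (hx1 : x ≤ 1) :
    ∃ D : Finset (Fin n × Fin m → Fin q), D ⊆ codePow q m n C ∧
      (∀ u ∈ D, ∀ v ∈ D, u ≠ v → d ≤ hammingDist u v) ∧
      x ^ d * (∑ c ∈ C, 1 / localDistEnum q m C c x) ^ n ≤ (D.card : ℝ) := by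
  set S := codePow q m n C
  obtain ⟨D, hDS, hD, hsum⟩ := exists_pairwise_not_rel_sum_inv_card_le
    (fun u v => hammingDist u v ≤ d - 1) (fun _ => by simp)
    (fun _ _ h => by rwa [hammingDist_comm]) S
  refine ⟨D, hDS, fun u hu v hv huv => by have := hD hu hv huv; omega, ?_⟩
  have hvertex : ∀ w ∈ S, x ^ (d - 1) * ∏ i, 1 / localDistEnum q m C (fun j => w (i, j)) x
      ≤ 1 / #{v ∈ S | hammingDist w v ≤ d - 1} := fun w hw => by
    rw [prod_div_distrib, prod_const_one, mul_one_div, ← sum_codePow_pow_hammingDist]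
    exact pow_div_sum_pow_hammingDist_le_one_div_card hx0.le hx1 hw (d - 1)
  calc x ^ d * (∑ c ∈ C, 1 / localDistEnum q m C c x) ^ n
      ≤ x ^ (d - 1) * (∑ c ∈ C, 1 / localDistEnum q m C c x) ^ n := by
        refine mul_le_mul_of_nonneg_right (pow_le_pow_of_le_one hx0.le hx1 (Nat.sub_le d 1)) ?_
        exact pow_nonneg (sum_nonneg fun c _ => by unfold localDistEnum; positivity) n
    _ ≤ ∑ w ∈ S, (1 : ℝ) / #{v ∈ S | hammingDist w v ≤ d - 1} := by
        rw [← sum_codePow_prod_one_div_localDistEnum, mul_sum]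
        exact sum_le_sum hvertex
    _ ≤ #D := hsum

theorem exists_subcode_of_codePow_caro_wei (q m n : ℕ) (hq : 2 ≤ q) (hm : 1 ≤ m)
    (hn : 1 ≤ n) (C : Finset (Fin m → Fin q)) (hC : C.Nonempty)
    (d : ℕ) (hd1 : 1 ≤ d) (hd2 : d ≤ m * n)
    (x : ℝ) (hx0 : 0 < x) (hx1 : x ≤ 1) :
    ∃ D : Finset (Fin n × Fin m → Fin q), D ⊆ codePow q m n C ∧
      (∀ u ∈ D, ∀ v ∈ D, u ≠ v → d ≤ hammingDist u v) ∧
      x ^ d * (∑ c ∈ C, 1 / localDistEnum q m C c x) ^ n ≤ (D.card : ℝ) :=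
  exists_subcode_of_codePow_caro_wei_general q m n C d x hx0 hx1
end

section
/- For every integer q ≥ 2 and every δ with 0 ≤ δ ≤ 1 − 1/q, one has α_q(δ) ≥ 1 − h_q(δ) (the asymptotic Gilbert–Varshamov bound). -/
open Finset

/-- `minDistGE q n d C` : any two distinct codewords of `C ⊆ Q^n` have Hamming
distance at least `d`. -/
def minDistGE (q n d : ℕ) (C : Finset (Fin n → Fin q)) : Prop :=
  ∀ u ∈ C, ∀ v ∈ C, u ≠ v → d ≤ hammingDist u v

/-- `Aq q n d` : maximum cardinality of a `q`-ary code of length `n` with minimum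
Hamming distance at least `d`. -/
noncomputable def Aq (q n d : ℕ) : ℕ :=
  sSup {k : ℕ | ∃ C : Finset (Fin n → Fin q), minDistGE q n d C ∧ C.card = k}

/-- `alphaQ q δ = limsup_{n→∞} (1/n)·log_q A_q(n, ⌈δn⌉)`. -/
noncomputable def alphaQ (q : ℕ) (δ : ℝ) : ℝ :=
  Filter.limsup (fun n : ℕ => Real.logb q (Aq q n ⌈δ * (n : ℝ)⌉₊) / n) Filter.atTop

/-- The `q`-ary entropy function `h_q(x)`. -/
noncomputable def entq (q : ℕ) (x : ℝ) : ℝ :=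
  -x * Real.logb q x - (1 - x) * Real.logb q (1 - x) + x * Real.logb q ((q : ℝ) - 1)

/-!
A code of maximal size with minimum distance `d` is a covering code: if some word were at
distance `≥ d` from every codeword, it could be added. So the Hamming balls of radius `d - 1`
around the codewords cover `Qⁿ`, and `A_q(n, d) · V_q(n, d - 1) ≥ qⁿ`. For `r ≤ δn` with
`δ ≤ 1 - 1/q`, comparing each term of `V_q(n, r) = ∑_{i ≤ r} C(n,i) (q-1)ⁱ` with the binomial
expansion of `(δ + (1 - δ))ⁿ` gives `V_q(n, r) ≤ q^{n h_q(δ)}`, so that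
`log_q A_q(n, ⌈δn⌉) ≥ n (1 - h_q(δ))` for every `n`.
-/

open Filter Real

section HammingBall

variable {ι α : Type*} [Fintype ι] [DecidableEq ι] [Fintype α] [DecidableEq α]

lemma card_piFinset_ite_erase_singleton (u : ι → α) (s : Finset ι) :
    #(Fintype.piFinset fun j => if j ∈ s then univ.erase (u j) else {u j}) =
      (Fintype.card α - 1) ^ #s := by
  simp [Fintype.card_piFinset, apply_ite card, card_erase_of_mem, prod_ite_mem]

lemma card_hammingBall_le (u : ι → α) (r : ℕ) :
    #{x | hammingDist x u ≤ r} ≤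
      ∑ i ∈ range (r + 1), (Fintype.card ι).choose i * (Fintype.card α - 1) ^ i := by
  set B : Finset ι → Finset (ι → α) := fun s =>
    Fintype.piFinset fun j => if j ∈ s then univ.erase (u j) else {u j}
  have hcover : ({x | hammingDist x u ≤ r} : Finset (ι → α)) ⊆
      (range (r + 1)).biUnion fun i => (powersetCard i univ).biUnion B := by
    intro x hx
    simp only [mem_biUnion, mem_range, mem_powersetCard]
    refine ⟨_, Nat.lt_succ_of_le (mem_filter.1 hx).2, ({j | x j ≠ u j} : Finset ι),
      ⟨subset_univ _, rfl⟩, ?_⟩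
    rw [Fintype.mem_piFinset]
    intro j
    by_cases h : x j = u j <;> simp [h]
  calc #{x | hammingDist x u ≤ r}
      ≤ ∑ i ∈ range (r + 1), ∑ s ∈ powersetCard i univ, #(B s) :=
        (card_le_card hcover).trans <| card_biUnion_le.trans <|
          sum_le_sum fun _ _ => card_biUnion_le
    _ = ∑ i ∈ range (r + 1), (Fintype.card ι).choose i * (Fintype.card α - 1) ^ i := by
        refine sum_congr rfl fun i _ => ?_
        rw [sum_congr rfl fun s hs => by
          rw [card_piFinset_ite_erase_singleton, (mem_powersetCard.1 hs).2], sum_const,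
          card_powersetCard, card_univ, smul_eq_mul]

end HammingBall

section Codes

variable {q n d : ℕ}

lemma bddAbove_card_codes (q n d : ℕ) :
    BddAbove {k | ∃ C : Finset (Fin n → Fin q), minDistGE q n d C ∧ #C = k} :=
  ⟨q ^ n, by
    rintro _ ⟨C, -, rfl⟩
    simpa using card_le_univ C⟩

lemma card_le_Aq {C : Finset (Fin n → Fin q)} (hC : minDistGE q n d C) : #C ≤ Aq q n d :=
  le_csSup (bddAbove_card_codes q n d) ⟨C, hC, rfl⟩

lemma exists_card_eq_Aq (q n d : ℕ) :
    ∃ C : Finset (Fin n → Fin q), minDistGE q n d C ∧ #C = Aq q n d :=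
  Nat.sSup_mem (by exact ⟨0, ∅, by simp [minDistGE]⟩) (bddAbove_card_codes q n d)

lemma Aq_le_pow (q n d : ℕ) : Aq q n d ≤ q ^ n := by
  obtain ⟨C, -, hC⟩ := exists_card_eq_Aq q n d
  simpa [← hC] using card_le_univ C

lemma Aq_pos (hq : 0 < q) : 0 < Aq q n d :=
  card_le_Aq (C := {fun _ => (⟨0, hq⟩ : Fin q)}) (by simp [minDistGE])

lemma minDistGE.insert {C : Finset (Fin n → Fin q)} (hC : minDistGE q n d C)
    {x : Fin n → Fin q} (hx : ∀ u ∈ C, d ≤ hammingDist x u) : minDistGE q n d (insert x C) := by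
  intro u hu v hv huv
  rcases mem_insert.1 hu with rfl | huC <;> rcases mem_insert.1 hv with rfl | hvC
  · exact absurd rfl huv
  · exact hx v hvC
  · exact hammingDist_comm v u ▸ hx u huC
  · exact hC u huC v hvC huv

lemma exists_hammingDist_le_of_card_eq_Aq {r : ℕ} (hd : d ≤ r + 1)
    {C : Finset (Fin n → Fin q)} (hC : minDistGE q n d C) (hmax : #C = Aq q n d)
    (x : Fin n → Fin q) : ∃ u ∈ C, hammingDist x u ≤ r := by
  by_contra! hfar
  have hx : x ∉ C := fun hx => by simpa using hfar x hx
  have := card_le_Aq (hC.insert fun u hu => hd.trans (hfar u hu))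
  rw [card_insert_of_notMem hx, hmax] at this
  omega

theorem pow_le_Aq_mul_sum_choose {r : ℕ} (hd : d ≤ r + 1) :
    q ^ n ≤ Aq q n d * ∑ i ∈ range (r + 1), n.choose i * (q - 1) ^ i := by
  obtain ⟨C, hC, hmax⟩ := exists_card_eq_Aq q n d
  have hcover : univ ⊆ C.biUnion fun u => ({x | hammingDist x u ≤ r} : Finset (Fin n → Fin q)) :=
    fun x _ => by simpa using exists_hammingDist_le_of_card_eq_Aq hd hC hmax x
  calc q ^ n = #(univ : Finset (Fin n → Fin q)) := by simp
    _ ≤ ∑ u ∈ C, #{x | hammingDist x u ≤ r} := (card_le_card hcover).trans card_biUnion_le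
    _ ≤ ∑ _u ∈ C, ∑ i ∈ range (r + 1), n.choose i * (q - 1) ^ i :=
        sum_le_sum fun u _ => by simpa using card_hammingBall_le u r
    _ = Aq q n d * ∑ i ∈ range (r + 1), n.choose i * (q - 1) ^ i := by
        rw [sum_const, hmax, smul_eq_mul]

end Codes

lemma sum_choose_mul_pow_mul_le_one {c δ : ℝ} (hc : 0 < c) (hδ0 : 0 < δ)
    (hδc : δ ≤ c * (1 - δ)) {n r : ℕ} (hr : (r : ℝ) ≤ δ * n) :
    (∑ i ∈ range (r + 1), (n.choose i : ℝ) * c ^ i) * (δ ^ δ * (1 - δ) ^ (1 - δ) / c ^ δ) ^ n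
      ≤ 1 := by
  have hδ1 : 0 < 1 - δ := by nlinarith
  set t := δ / (c * (1 - δ)) with ht
  have ht1 : t ≤ 1 := div_le_one_of_le₀ hδc (by positivity)
  have hrn : r ≤ n := by exact_mod_cast hr.trans (by nlinarith : δ * n ≤ n)
  -- Each term is the binomial term `C(n,i) δⁱ (1-δ)ⁿ⁻ⁱ` times `t ^ (δn - i) ≤ 1`.
  have hterm : ∀ i ≤ n, c ^ i * (δ ^ δ * (1 - δ) ^ (1 - δ) / c ^ δ) ^ n
      = δ ^ i * (1 - δ) ^ (n - i) * t ^ (δ * n - i) := by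
    intro i hi
    rw [← exp_log (by positivity : 0 < c ^ i * (δ ^ δ * (1 - δ) ^ (1 - δ) / c ^ δ) ^ n),
      ← exp_log (by positivity : 0 < δ ^ i * (1 - δ) ^ (n - i) * t ^ (δ * n - i))]
    congr 1
    simp (disch := positivity) only [ht, log_mul, log_div, log_pow, log_rpow, Nat.cast_sub hi]
    ring
  calc _ = ∑ i ∈ range (r + 1), δ ^ i * (1 - δ) ^ (n - i) * n.choose i * t ^ (δ * n - i) := by
        rw [sum_mul]
        refine sum_congr rfl fun i hi => ?_
        rw [mul_assoc, hterm i (by grind)]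
        ring
    _ ≤ ∑ i ∈ range (r + 1), δ ^ i * (1 - δ) ^ (n - i) * n.choose i := by
        refine sum_le_sum fun i hi => mul_le_of_le_one_right (by positivity)
          (rpow_le_one (by positivity) ht1 (sub_nonneg.2 ?_))
        exact le_trans (by exact_mod_cast Nat.lt_succ_iff.1 (mem_range.1 hi)) hr
    _ ≤ ∑ i ∈ range (n + 1), δ ^ i * (1 - δ) ^ (n - i) * n.choose i :=
        sum_le_sum_of_subset_of_nonneg (range_subset_range.2 (by omega))
          fun _ _ _ => by positivity
    _ = 1 := by rw [← add_pow, add_sub_cancel, one_pow]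

lemma rpow_neg_entq {q : ℕ} (hq : 1 < q) {δ : ℝ} (hδ0 : 0 < δ) (hδ1 : δ < 1) :
    (q : ℝ) ^ (-entq q δ) = δ ^ δ * (1 - δ) ^ (1 - δ) / ((q : ℝ) - 1) ^ δ := by
  have hq' : (1 : ℝ) < q := by exact_mod_cast hq
  have hδ1' : 0 < 1 - δ := by linarith
  have hc : 0 < (q : ℝ) - 1 := by linarith
  rw [← exp_log (by positivity : 0 < (q : ℝ) ^ (-entq q δ)),
    ← exp_log (by positivity : 0 < δ ^ δ * (1 - δ) ^ (1 - δ) / ((q : ℝ) - 1) ^ δ)]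
  congr 1
  have hlogq : log q ≠ 0 := (log_pos hq').ne'
  simp (disch := positivity) only [log_rpow, log_mul, log_div, entq, logb]
  field_simp
  ring

lemma sum_choose_mul_pow_le_rpow_entq {q : ℕ} (hq : 2 ≤ q) {δ : ℝ} (hδ0 : 0 ≤ δ)
    (hδ1 : δ ≤ 1 - 1 / q) {n r : ℕ} (hr : (r : ℝ) ≤ δ * n) :
    ((∑ i ∈ range (r + 1), n.choose i * (q - 1) ^ i : ℕ) : ℝ) ≤ (q : ℝ) ^ (n * entq q δ) := by
  rcases hδ0.eq_or_lt with rfl | hδ0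
  · obtain rfl : r = 0 := by simpa using hr
    simp [entq]
  have hq' : (2 : ℝ) ≤ q := by exact_mod_cast hq
  have hδc : δ ≤ ((q : ℝ) - 1) * (1 - δ) := by
    have : 1 / (q : ℝ) * q = 1 := one_div_mul_cancel (by positivity)
    nlinarith
  have key := sum_choose_mul_pow_mul_le_one (by linarith) hδ0 hδc hr
  rw [← rpow_neg_entq hq hδ0 (by nlinarith), ← rpow_mul_natCast (by positivity),
    ← le_div_iff₀ (by positivity), one_div, ← rpow_neg (by positivity), neg_mul, neg_neg,
    mul_comm] at key
  push_cast [Nat.cast_sub (one_le_two.trans hq)]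
  exact key

lemma rpow_mul_one_sub_entq_le_Aq {q : ℕ} (hq : 2 ≤ q) {δ : ℝ} (hδ0 : 0 ≤ δ)
    (hδ1 : δ ≤ 1 - 1 / q) (n : ℕ) : (q : ℝ) ^ (n * (1 - entq q δ)) ≤ Aq q n ⌈δ * n⌉₊ := by
  have hgv : (q : ℝ) ^ n ≤ Aq q n ⌈δ * n⌉₊ *
      ((∑ i ∈ range (⌊δ * n⌋₊ + 1), n.choose i * (q - 1) ^ i : ℕ) : ℝ) := by
    exact_mod_cast pow_le_Aq_mul_sum_choose (Nat.ceil_le_floor_add_one (δ * n))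
  have hV := sum_choose_mul_pow_le_rpow_entq hq hδ0 hδ1 (n := n) (Nat.floor_le (by positivity))
  rw [mul_one_sub, rpow_sub (by positivity), rpow_natCast, div_le_iff₀ (by positivity)]
  exact hgv.trans (by gcongr)

/-- The asymptotic Gilbert–Varshamov bound. -/
theorem asymptotic_gilbert_varshamov (q : ℕ) (hq : 2 ≤ q)
    (δ : ℝ) (hδ0 : 0 ≤ δ) (hδ1 : δ ≤ 1 - 1 / (q : ℝ)) :
    1 - entq q δ ≤ alphaQ q δ := by
  have hq' : (1 : ℝ) < q := by exact_mod_cast hq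
  have hA (n : ℕ) : (0 : ℝ) < Aq q n ⌈δ * n⌉₊ := by exact_mod_cast Aq_pos (by omega)
  have hbdd : IsBoundedUnder (· ≤ ·) atTop fun n : ℕ => logb q (Aq q n ⌈δ * n⌉₊) / n := by
    refine isBoundedUnder_of ⟨1, fun n => div_le_one_of_le₀ ?_ n.cast_nonneg⟩
    calc logb q (Aq q n ⌈δ * n⌉₊) ≤ logb q ((q : ℝ) ^ n) :=
          logb_le_logb_of_le hq' (hA n) (by exact_mod_cast Aq_le_pow ..)
      _ = n := by rw [← rpow_natCast, logb_rpow (by positivity) hq'.ne']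
  refine le_limsup_of_frequently_le (Eventually.frequently <|
    eventually_atTop.2 ⟨1, fun n hn => ?_⟩) hbdd
  rw [le_div_iff₀ (by exact_mod_cast hn), mul_comm, le_logb_iff_rpow_le hq' (hA n)]
  exact rpow_mul_one_sub_entq_le_Aq hq hδ0 hδ1 n
end
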